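/- Let R be a commutative ring of prime characteristic p > 0 and r_0, r_1, r_2 elements of R. For each n ≥ 1 let M_n be the n×n tridiagonal matrix with r_1 on the main diagonal, r_0 on the superdiagonal, and r_2 on the subdiagonal. Then for every integer e ≥ 1, det M_{p^e−1} = (det M_{p−1})^{1+p+⋯+p^{e−1}}. -/

import Mathlib

/-- The `n × n` tridiagonal matrix with `r₁` on the main diagonal, `r₀` on the superdiagonal and
`r₂` on the subdiagonal. -/
def tridiag {R : Type} [CommRing R] (r₀ r₁ r₂ : R) (n : ℕ) : Matrix (Fin n) (Fin n) R :=
  Matrix.of fun i j =>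
    if (i : ℕ) = (j : ℕ) then r₁
    else if (j : ℕ) = (i : ℕ) + 1 then r₀
    else if (i : ℕ) = (j : ℕ) + 1 then r₂
    else 0

/-! Expanding along the first row gives `det M_n = U_(n+1)` for the Lucas sequence
`U_(n+2) = r₁ U_(n+1) - r₀ r₂ U_n`. If `r₁ = a + b` and `r₀ r₂ = a b`, then
`U_n (a - b) = a^n - b^n`, so in characteristic `p` the Frobenius gives
`U_(p^e) = (a - b)^(p^e - 1) = U_p ^ ((p^e - 1)/(p - 1))`, provided `a - b` can be cancelled.
This is the case generically: `𝔽_p[P, Q]` embeds into the domain `𝔽_p[a, b]` via the elementary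
symmetric polynomials, and the identity then specialises to any `r₀, r₁, r₂`. -/

open MvPolynomial

def lucasU {R : Type*} [CommRing R] (P Q : R) : ℕ → R
  | 0 => 0
  | 1 => 1
  | n + 2 => P * lucasU P Q (n + 1) - Q * lucasU P Q n

section LucasU

variable {R : Type*} [CommRing R]

lemma map_lucasU {S F : Type*} [CommRing S] [FunLike F R S] [RingHomClass F R S] (f : F)
    (P Q : R) (n : ℕ) : f (lucasU P Q n) = lucasU (f P) (f Q) n := by
  induction n using Nat.twoStepInduction with
  | zero => simp [lucasU]
  | one => simp [lucasU]
  | more n ih₀ ih₁ => simp [lucasU, ih₀, ih₁]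

lemma lucasU_add_mul_mul_sub (a b : R) (n : ℕ) :
    lucasU (a + b) (a * b) n * (a - b) = a ^ n - b ^ n := by
  induction n using Nat.twoStepInduction with
  | zero => simp [lucasU]
  | one => simp [lucasU]
  | more n ih₀ ih₁ =>
    rw [lucasU]
    linear_combination (a + b) * ih₁ - a * b * ih₀

lemma esymm_fin_two_one : esymm (Fin 2) R 1 = X 0 + X 1 := by
  simp [esymm, Finset.powersetCard_one]

lemma esymm_fin_two_two : esymm (Fin 2) R 2 = X 0 * X 1 := by
  have h : Finset.powersetCard 2 (Finset.univ : Finset (Fin 2)) = {Finset.univ} :=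
    Finset.powersetCard_self _
  simp [esymm, h, Fin.prod_univ_two]

variable (p : ℕ) [Fact p.Prime] [CharP R p]

lemma lucasU_add_mul_char_pow [IsDomain R] {a b : R} (hab : a ≠ b) (e : ℕ) :
    lucasU (a + b) (a * b) (p ^ e) = (a - b) ^ (p ^ e - 1) := by
  apply mul_right_cancel₀ (sub_ne_zero.mpr hab)
  rw [lucasU_add_mul_mul_sub, ← sub_pow_char_pow, ← pow_succ,
    Nat.sub_add_cancel (Nat.one_le_pow _ _ (Fact.out : p.Prime).pos)]

lemma lucasU_add_mul_char_pow_eq_pow [IsDomain R] {a b : R} (hab : a ≠ b) (e : ℕ) :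
    lucasU (a + b) (a * b) (p ^ e) =
      lucasU (a + b) (a * b) p ^ (∑ j ∈ Finset.range e, p ^ j) := by
  have hgeom := geom_sum_mul_of_one_le (Fact.out : p.Prime).one_lt.le e
  rw [lucasU_add_mul_char_pow p hab, ← pow_one p, lucasU_add_mul_char_pow p hab, pow_one,
    ← pow_mul, ← hgeom, mul_comm]

lemma lucasU_X_char_pow (e : ℕ) :
    lucasU (X 0 : MvPolynomial (Fin 2) (ZMod p)) (X 1) (p ^ e) =
      lucasU (X 0) (X 1) p ^ (∑ j ∈ Finset.range e, p ^ j) := by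
  let φ := aeval (R := ZMod p) fun i : Fin 2 => esymm (Fin 2) (ZMod p) (i + 1)
  have hφ : Function.Injective φ := by
    intro f g h
    apply esymmAlgHom_injective (ZMod p) (Fintype.card_fin 2).ge
    ext1
    simpa only [esymmAlgHom_apply] using h
  apply hφ
  simp only [map_pow, map_lucasU, φ, aeval_X, Fin.val_zero, Fin.val_one, zero_add,
    one_add_one_eq_two, esymm_fin_two_one, esymm_fin_two_two]
  exact lucasU_add_mul_char_pow_eq_pow p (X_injective.ne (by decide)) e

lemma lucasU_char_pow (P Q : R) (e : ℕ) :
    lucasU P Q (p ^ e) = lucasU P Q p ^ (∑ j ∈ Finset.range e, p ^ j) := by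
  have h := congrArg (eval₂Hom (ZMod.castHom dvd_rfl R) ![P, Q]) (lucasU_X_char_pow p e)
  simp only [map_pow, map_lucasU, eval₂Hom_X'] at h
  simpa using h

end LucasU

section Tridiag

variable {R : Type} [CommRing R] (r₀ r₁ r₂ : R)

lemma tridiag_submatrix_succ_succ (n : ℕ) :
    (tridiag r₀ r₁ r₂ (n + 1)).submatrix Fin.succ Fin.succ = tridiag r₀ r₁ r₂ n := by
  ext i j
  simp [tridiag]

lemma det_tridiag_submatrix_succ_one_succAbove (n : ℕ) :
    ((tridiag r₀ r₁ r₂ (n + 2)).submatrix Fin.succ (Fin.succAbove 1)).det =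
      r₂ * (tridiag r₀ r₁ r₂ n).det := by
  have hminor : (tridiag r₀ r₁ r₂ (n + 2)).submatrix (Fin.succ ∘ Fin.succ)
      (Fin.succAbove 1 ∘ Fin.succ) = tridiag r₀ r₁ r₂ n := by
    ext i j
    simp [tridiag]
  rw [Matrix.det_succ_column_zero, Fin.sum_univ_succ]
  simp only [Fin.succAbove_zero, Matrix.submatrix_submatrix, hminor]
  simp [tridiag]

lemma det_tridiag_add_two (n : ℕ) :
    (tridiag r₀ r₁ r₂ (n + 2)).det =
      r₁ * (tridiag r₀ r₁ r₂ (n + 1)).det - r₀ * r₂ * (tridiag r₀ r₁ r₂ n).det := by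
  rw [Matrix.det_succ_row_zero, Fin.sum_univ_succ, Fin.sum_univ_succ]
  simp only [Fin.succAbove_zero, tridiag_submatrix_succ_succ, Fin.succ_zero_eq_one,
    det_tridiag_submatrix_succ_one_succAbove]
  simp [tridiag, sub_eq_add_neg, mul_assoc]

lemma det_tridiag (n : ℕ) : (tridiag r₀ r₁ r₂ n).det = lucasU r₁ (r₀ * r₂) (n + 1) := by
  induction n using Nat.twoStepInduction with
  | zero => simp [lucasU]
  | one => simp [tridiag, lucasU]
  | more n ih₀ ih₁ =>
    rw [det_tridiag_add_two, ih₀, ih₁]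
    rfl

end Tridiag

theorem stmt_6 {R : Type} [CommRing R] (p : ℕ) (hp : p.Prime) [CharP R p]
    (r₀ r₁ r₂ : R) (e : ℕ) :
    (tridiag r₀ r₁ r₂ (p ^ e - 1)).det =
      (tridiag r₀ r₁ r₂ (p - 1)).det ^ (∑ j ∈ Finset.range e, p ^ j) := by
  have := Fact.mk hp
  rw [det_tridiag, det_tridiag, Nat.sub_add_cancel hp.one_le,
    Nat.sub_add_cancel (Nat.one_le_pow _ _ hp.pos)]
  exact lucasU_char_pow p r₁ (r₀ * r₂) e
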